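/- The limit φ(z) := lim_{M→∞, M even} φ_M(z) exists for each z ∈ {−1,1} and equals min{ g(z), (3g(z) + g(−z))/4 + β }. -/

import Mathlib

open scoped Classical

noncomputable section

namespace DP4

/-- Points of the lattice `ℤ²`. -/
abbrev Z2 := Fin 2 → ℤ

/-- The integer points of the square `Q_M = [-M/2, M/2)²`. -/
def Qc2 (M : ℕ) : Finset Z2 :=
  Fintype.piFinset fun _ => Finset.Ico (-((M / 2 : ℕ) : ℤ)) (((M + 1) / 2 : ℕ) : ℤ)

/-- A site is weak if it belongs to `2ℤ²`. -/
def IsWeak (k : Z2) : Prop := ∀ i, (2 : ℤ) ∣ k i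

/-- The energy of a spin field on `Z(Q_M)`: each nearest-neighbour bond touching a weak
site carries the coefficient `β/4` (unordered pairs counted once, via the positively
oriented representative), plus the forcing term `g`. -/
def en4 (g : ℝ → ℝ) (β : ℝ) (M : ℕ) (v : Z2 → ℝ) : ℝ :=
  (∑ p ∈ (Qc2 M ×ˢ Qc2 M).filter (fun p =>
      (∃ i, p.2 = p.1 + fun j => if j = i then 1 else 0) ∧
      (IsWeak p.1 ∨ IsWeak p.2)),
    β / 4 * (v p.1 - v p.2) ^ 2) +
  ∑ k ∈ Qc2 M, g (v k)

/-- `φ_M(z)`: the minimal energy density over spin fields frozen at `z` at all strong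
sites of `Z(Q_M)`. -/
def phi4 (g : ℝ → ℝ) (β z : ℝ) (M : ℕ) : ℝ :=
  sInf (en4 g β M ''
    {v : Z2 → ℝ | (∀ k ∈ Qc2 M, v k = 1 ∨ v k = -1) ∧
      ∀ k ∈ Qc2 M, ¬ IsWeak k → v k = z}) / (M : ℝ) ^ 2

end DP4

namespace DP4Aux
open DP4

def e (i : Fin 2) : Z2 := fun j => if j = i then 1 else 0

lemma mem_Qc2 {N : ℕ} {k : Z2} : k ∈ Qc2 (2 * N) ↔ ∀ i, -(N : ℤ) ≤ k i ∧ k i < N := by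
  have h1 : (2 * N) / 2 = N := by omega
  have h2 : (2 * N + 1) / 2 = N := by omega
  simp [Qc2, Fintype.mem_piFinset, Finset.mem_Ico, h1, h2]

lemma not_weak_add {k : Z2} (i : Fin 2) (hw : IsWeak k) : ¬ IsWeak (k + e i) := by
  intro h
  have h1 := hw i
  have h2 := h i
  simp [e, Pi.add_apply] at h2
  omega

lemma not_weak_of_step {a b : Z2} (i : Fin 2) (h : b = a + fun j => if j = i then 1 else 0)
    (hw : IsWeak a) : ¬ IsWeak b := by
  have : b = a + e i := h
  rw [this]; exact not_weak_add i hw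

lemma not_weak_of_step' {a b : Z2} (i : Fin 2) (h : b = a + fun j => if j = i then 1 else 0)
    (hw : IsWeak b) : ¬ IsWeak a := by
  intro ha
  exact not_weak_of_step i h ha hw

lemma evens_card (N : ℕ) :
    ((Finset.Ico (-(N : ℤ)) (N : ℤ)).filter (fun x => (2 : ℤ) ∣ x)).card = N := by
  have hset : ((Finset.Ico (-(N : ℤ)) (N : ℤ)).filter (fun x => (2 : ℤ) ∣ x)) =
      Finset.image (fun y : ℤ => 2 * y)
        (Finset.Ico (-((N / 2 : ℕ) : ℤ)) (((N + 1) / 2 : ℕ) : ℤ)) := by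
    ext x
    simp only [Finset.mem_filter, Finset.mem_Ico, Finset.mem_image]
    constructor
    · rintro ⟨⟨h1, h2⟩, c, rfl⟩
      exact ⟨c, ⟨by omega, by omega⟩, rfl⟩
    · rintro ⟨c, ⟨hc1, hc2⟩, rfl⟩
      exact ⟨⟨by omega, by omega⟩, c, rfl⟩
  rw [hset, Finset.card_image_of_injective _ (mul_right_injective₀ (by norm_num : (2:ℤ) ≠ 0)),
    Int.card_Ico]
  omega

lemma card_Qc2 (N : ℕ) : (Qc2 (2 * N)).card = 4 * N ^ 2 := by
  have h1 : (2 * N) / 2 = N := by omega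
  have h2 : (2 * N + 1) / 2 = N := by omega
  rw [Qc2, Fintype.card_piFinset]
  simp only [h1, h2, Int.card_Ico, Finset.prod_const, Finset.card_univ, Fintype.card_fin]
  have : ((N : ℤ) - -(N : ℤ)).toNat = 2 * N := by omega
  rw [this]; ring

lemma weak_filter_eq (N : ℕ) : (Qc2 (2 * N)).filter IsWeak =
    Fintype.piFinset (fun _ : Fin 2 => (Finset.Ico (-(N : ℤ)) (N : ℤ)).filter (fun x => (2:ℤ) ∣ x)) := by
  ext k
  simp only [Finset.mem_filter, Fintype.mem_piFinset, Finset.mem_Ico, IsWeak]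
  rw [mem_Qc2 (N := N)]
  constructor
  · rintro ⟨h1, h2⟩ i; exact ⟨h1 i, h2 i⟩
  · intro h; exact ⟨fun i => (h i).1, fun i => (h i).2⟩

lemma card_weak (N : ℕ) : ((Qc2 (2 * N)).filter IsWeak).card = N ^ 2 := by
  rw [weak_filter_eq, Fintype.card_piFinset]
  simp [evens_card, sq]

def Bonds (M : ℕ) : Finset (Z2 × Z2) :=
  (Qc2 M ×ˢ Qc2 M).filter (fun p =>
    (∃ i, p.2 = p.1 + fun j => if j = i then 1 else 0) ∧
    (IsWeak p.1 ∨ IsWeak p.2))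

def wpt (p : Z2 × Z2) : Z2 := if IsWeak p.1 then p.1 else p.2

def deg (M : ℕ) (k : Z2) : ℕ := ((Bonds M).filter (fun p => wpt p = k)).card

lemma en4_eq_bonds (g : ℝ → ℝ) (β : ℝ) (M : ℕ) (v : Z2 → ℝ) :
    en4 g β M v = (∑ p ∈ Bonds M, β / 4 * (v p.1 - v p.2) ^ 2) + ∑ k ∈ Qc2 M, g (v k) := rfl

lemma mem_bonds {M : ℕ} {p : Z2 × Z2} :
    p ∈ Bonds M ↔ (p.1 ∈ Qc2 M ∧ p.2 ∈ Qc2 M) ∧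
      (∃ i, p.2 = p.1 + e i) ∧ (IsWeak p.1 ∨ IsWeak p.2) := by
  simp only [Bonds, Finset.mem_filter, Finset.mem_product]
  rfl

lemma wpt_mem {M : ℕ} {p : Z2 × Z2} (hp : p ∈ Bonds M) :
    IsWeak (wpt p) ∧ wpt p ∈ Qc2 M := by
  rw [mem_bonds] at hp
  obtain ⟨⟨h1, h2⟩, _, hw⟩ := hp
  unfold wpt
  by_cases h : IsWeak p.1
  · simp [h, h1]
  · simp [h]
    exact ⟨hw.resolve_left h, h2⟩

lemma bond_sum_eq (g : ℝ → ℝ) (β z : ℝ) (M : ℕ) (v : Z2 → ℝ)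
    (hv : ∀ k ∈ Qc2 M, ¬ IsWeak k → v k = z) :
    ∑ p ∈ Bonds M, β / 4 * (v p.1 - v p.2) ^ 2
      = ∑ k ∈ (Qc2 M).filter IsWeak, (deg M k : ℝ) * (β / 4 * (v k - z) ^ 2) := by
  rw [← Finset.sum_fiberwise_of_maps_to (g := wpt)
    (fun p hp => Finset.mem_filter.mpr ⟨(wpt_mem hp).2, (wpt_mem hp).1⟩)
    (fun p => β / 4 * (v p.1 - v p.2) ^ 2)]
  apply Finset.sum_congr rfl
  intro k hk
  have hinner : ∀ p ∈ (Bonds M).filter (fun p => wpt p = k),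
      β / 4 * (v p.1 - v p.2) ^ 2 = β / 4 * (v k - z) ^ 2 := by
    intro p hp
    obtain ⟨hpB, hpk⟩ := Finset.mem_filter.mp hp
    obtain ⟨⟨h1, h2⟩, ⟨i, hi⟩, hw⟩ := mem_bonds.mp hpB
    by_cases hw1 : IsWeak p.1
    · have hk1 : p.1 = k := by simpa [wpt, hw1] using hpk
      have hs : ¬ IsWeak p.2 := by rw [hi]; exact not_weak_add i hw1
      have hvz : v p.2 = z := hv _ h2 hs
      rw [hk1, hvz]
    · have hk2 : p.2 = k := by simpa [wpt, hw1] using hpk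
      have hvz : v p.1 = z := hv _ h1 hw1
      rw [hk2, hvz]
      ring
  rw [Finset.sum_congr rfl hinner, Finset.sum_const, nsmul_eq_mul]
  rfl

lemma en4_decomp (g : ℝ → ℝ) (β z : ℝ) (M : ℕ) (v : Z2 → ℝ)
    (hv : ∀ k ∈ Qc2 M, ¬ IsWeak k → v k = z) :
    en4 g β M v = ∑ k ∈ Qc2 M,
      (g (v k) + if IsWeak k then (deg M k : ℝ) * (β / 4 * (v k - z) ^ 2) else 0) := by
  rw [en4_eq_bonds, bond_sum_eq g β z M v hv, Finset.sum_add_distrib]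
  rw [← Finset.sum_filter]
  ring

lemma not_weak_sub {k : Z2} (i : Fin 2) (hw : IsWeak k) : ¬ IsWeak (k - e i) := by
  intro h; have h1 := hw i; have h2 := h i; simp [e, Pi.sub_apply] at h2; omega

def nbrs (k : Z2) : Finset (Z2 × Z2) :=
  {(k, k + e 0), (k, k + e 1), (k - e 0, k), (k - e 1, k)}

lemma fiber_subset (M : ℕ) (k : Z2) :
    (Bonds M).filter (fun p => wpt p = k) ⊆ nbrs k := by
  intro p hp
  obtain ⟨hpB, hpk⟩ := Finset.mem_filter.mp hp
  obtain ⟨⟨h1, h2⟩, ⟨i, hi⟩, hw⟩ := mem_bonds.mp hpB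
  by_cases hw1 : IsWeak p.1
  · have hk1 : p.1 = k := by simpa [wpt, hw1] using hpk
    have hp2 : p.2 = k + e i := by rw [hi, hk1]
    have : p = (k, k + e i) := Prod.ext hk1 hp2
    fin_cases i <;> simp [nbrs, this]
  · have hk2 : p.2 = k := by simpa [wpt, hw1] using hpk
    have hp1 : p.1 = k - e i := by rw [← hk2, hi, add_sub_cancel_right]
    have : p = (k - e i, k) := Prod.ext hp1 hk2
    fin_cases i <;> simp [nbrs, this]

lemma card_nbrs_le (k : Z2) : (nbrs k).card ≤ 4 := by
  unfold nbrs
  apply (Finset.card_insert_le _ _).trans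
  have h2 : ({(k, k + e 1), (k - e 0, k), (k - e 1, k)} : Finset (Z2 × Z2)).card ≤ 3 := by
    apply (Finset.card_insert_le _ _).trans
    have h3 : ({(k - e 0, k), (k - e 1, k)} : Finset (Z2 × Z2)).card ≤ 2 := by
      apply (Finset.card_insert_le _ _).trans
      simp
    omega
  omega

lemma deg_le_four (M : ℕ) (k : Z2) : deg M k ≤ 4 :=
  le_trans (Finset.card_le_card (fiber_subset M k)) (card_nbrs_le k)

lemma add_e_ne (k : Z2) (i : Fin 2) : k + e i ≠ k := by
  intro h; have := congrFun h i; simp [e] at this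

lemma sub_e_ne (k : Z2) (i : Fin 2) : k - e i ≠ k := by
  intro h; have := congrFun h i; simp [e, Pi.sub_apply] at this

lemma deg_interior (M : ℕ) (k : Z2) (hk : IsWeak k) (hmem : k ∈ Qc2 M)
    (h1 : ∀ i, k + e i ∈ Qc2 M) (h2 : ∀ i, k - e i ∈ Qc2 M) : deg M k = 4 := by
  have hset : (Bonds M).filter (fun p => wpt p = k) = nbrs k := by
    apply Finset.Subset.antisymm (fiber_subset M k)
    intro p hp
    simp only [nbrs, Finset.mem_insert, Finset.mem_singleton] at hp
    apply Finset.mem_filter.mpr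
    rcases hp with h | h | h | h <;> subst h
    · exact ⟨mem_bonds.mpr ⟨⟨hmem, h1 0⟩, ⟨0, rfl⟩, Or.inl hk⟩, by simp [wpt, hk]⟩
    · exact ⟨mem_bonds.mpr ⟨⟨hmem, h1 1⟩, ⟨1, rfl⟩, Or.inl hk⟩, by simp [wpt, hk]⟩
    · exact ⟨mem_bonds.mpr ⟨⟨h2 0, hmem⟩, ⟨0, by funext j; simp [e, Pi.add_apply, Pi.sub_apply]⟩, Or.inr hk⟩,
        by simp [wpt, not_weak_sub 0 hk]⟩
    · exact ⟨mem_bonds.mpr ⟨⟨h2 1, hmem⟩, ⟨1, by funext j; simp [e, Pi.add_apply, Pi.sub_apply]⟩, Or.inr hk⟩,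
        by simp [wpt, not_weak_sub 1 hk]⟩
  rw [deg, hset]
  have hab : (k, k + e 0) ≠ (k, k + e 1) := by
    intro h
    have := congrFun (congrArg Prod.snd h) 0
    simp [e] at this
  have hac : (k, k + e 0) ≠ (k - e 0, k) := by
    intro h; exact sub_e_ne k 0 (congrArg Prod.fst h).symm
  have had : (k, k + e 0) ≠ (k - e 1, k) := by
    intro h; exact sub_e_ne k 1 (congrArg Prod.fst h).symm
  have hbc : (k, k + e 1) ≠ (k - e 0, k) := by
    intro h; exact sub_e_ne k 0 (congrArg Prod.fst h).symm
  have hbd : (k, k + e 1) ≠ (k - e 1, k) := by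
    intro h; exact sub_e_ne k 1 (congrArg Prod.fst h).symm
  have hcd : (k - e 0, k) ≠ (k - e 1, k) := by
    intro h
    have := congrFun (congrArg Prod.fst h) 0
    simp [e, Pi.sub_apply] at this
  rw [nbrs, Finset.card_insert_of_notMem (by simp [hab, hac, had]),
    Finset.card_insert_of_notMem (by simp [hbc, hbd]),
    Finset.card_insert_of_notMem (by simp [hcd]), Finset.card_singleton]
lemma z_sq {z : ℝ} (hz : z = 1 ∨ z = -1) : z ^ 2 = 1 := by
  rcases hz with h | h <;> rw [h] <;> norm_num

lemma val_cases {z x : ℝ} (hz : z = 1 ∨ z = -1) (hx : x = 1 ∨ x = -1) :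
    x = z ∨ x = -z := by
  rcases hz with h | h <;> rcases hx with h' | h' <;> subst h <;> subst h' <;> norm_num

def S (g : ℝ → ℝ) (β z : ℝ) (M : ℕ) : ℝ :=
  ∑ k ∈ Qc2 M, (if IsWeak k then min (g z) (g (-z) + (deg M k : ℝ) * β) else g z)

lemma en4_ge (g : ℝ → ℝ) (β z : ℝ) (hz : z = 1 ∨ z = -1) (M : ℕ) (v : Z2 → ℝ)
    (hv1 : ∀ k ∈ Qc2 M, v k = 1 ∨ v k = -1)
    (hv2 : ∀ k ∈ Qc2 M, ¬ IsWeak k → v k = z) :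
    S g β z M ≤ en4 g β M v := by
  rw [en4_decomp g β z M v hv2, S]
  apply Finset.sum_le_sum
  intro k hk
  by_cases hw : IsWeak k
  · simp only [hw, if_true]
    rcases val_cases hz (hv1 k hk) with h | h
    · rw [h]
      simpa using min_le_left (g z) (g (-z) + (deg M k : ℝ) * β)
    · rw [h]
      have e4 : (-z - z) ^ 2 = 4 := by
        have := z_sq hz; nlinarith [z_sq hz]
      rw [e4]
      have : (deg M k : ℝ) * (β / 4 * 4) = (deg M k : ℝ) * β := by ring
      rw [this]
      exact min_le_right _ _
  · simp only [hw, if_false]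
    rw [hv2 k hk hw]
    simp

def vstar (g : ℝ → ℝ) (β z : ℝ) (M : ℕ) : Z2 → ℝ :=
  fun k => if IsWeak k ∧ g (-z) + (deg M k : ℝ) * β < g z then -z else z

lemma vstar_adm (g : ℝ → ℝ) (β z : ℝ) (hz : z = 1 ∨ z = -1) (M : ℕ) :
    (∀ k ∈ Qc2 M, vstar g β z M k = 1 ∨ vstar g β z M k = -1) ∧
    (∀ k ∈ Qc2 M, ¬ IsWeak k → vstar g β z M k = z) := by
  constructor
  · intro k _
    unfold vstar
    by_cases h : IsWeak k ∧ g (-z) + (deg M k : ℝ) * β < g z <;>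
      simp [h] <;> rcases hz with h' | h' <;> simp [h']
  · intro k _ hw
    unfold vstar
    rw [if_neg (fun hc => hw hc.1)]

lemma en4_vstar (g : ℝ → ℝ) (β z : ℝ) (hz : z = 1 ∨ z = -1) (M : ℕ) :
    en4 g β M (vstar g β z M) = S g β z M := by
  rw [en4_decomp g β z M _ (vstar_adm g β z hz M).2, S]
  apply Finset.sum_congr rfl
  intro k _
  by_cases hw : IsWeak k
  · simp only [hw, if_true]
    by_cases hlt : g (-z) + (deg M k : ℝ) * β < g z
    · have hv : vstar g β z M k = -z := by rw [vstar, if_pos ⟨hw, hlt⟩]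
      rw [hv]
      have e4 : (-z - z) ^ 2 = 4 := by nlinarith [z_sq hz]
      rw [e4, min_eq_right hlt.le]
      ring
    · have hv : vstar g β z M k = z := by
        rw [vstar, if_neg (fun hc => hlt hc.2)]
      rw [hv, min_eq_left (not_lt.mp hlt)]
      simp
  · simp only [hw, if_false]
    have hv : vstar g β z M k = z := by rw [vstar, if_neg (fun hc => hw hc.1)]
    rw [hv, add_zero]

lemma phi4_eq (g : ℝ → ℝ) (β z : ℝ) (hz : z = 1 ∨ z = -1) (M : ℕ) :
    phi4 g β z M = S g β z M / (M : ℝ) ^ 2 := by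
  unfold phi4
  congr 1
  have hmem : S g β z M ∈ en4 g β M ''
      {v : Z2 → ℝ | (∀ k ∈ Qc2 M, v k = 1 ∨ v k = -1) ∧
        ∀ k ∈ Qc2 M, ¬ IsWeak k → v k = z} :=
    ⟨vstar g β z M, ⟨(vstar_adm g β z hz M).1, (vstar_adm g β z hz M).2⟩,
      en4_vstar g β z hz M⟩
  have hlb : ∀ x ∈ en4 g β M ''
      {v : Z2 → ℝ | (∀ k ∈ Qc2 M, v k = 1 ∨ v k = -1) ∧
        ∀ k ∈ Qc2 M, ¬ IsWeak k → v k = z}, S g β z M ≤ x := by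
    rintro x ⟨v, ⟨h1, h2⟩, rfl⟩
    exact en4_ge g β z hz M v h1 h2
  exact le_antisymm (csInf_le ⟨S g β z M, hlb⟩ hmem) (le_csInf ⟨_, hmem⟩ hlb)
def m4 (g : ℝ → ℝ) (β z : ℝ) : ℝ := min (g z) (g (-z) + 4 * β)

lemma limit_identity (g : ℝ → ℝ) (β z : ℝ) :
    (3 * g z + m4 g β z) / 4 = min (g z) ((3 * g z + g (-z)) / 4 + β) := by
  rcases le_total (g z) (g (-z) + 4 * β) with h | h
  · rw [m4, min_eq_left h, min_eq_left (by linarith)]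
    ring
  · rw [m4, min_eq_right h, min_eq_right (by linarith)]
    ring

lemma abs_min_sub_min (a x y : ℝ) : |min a x - min a y| ≤ |x - y| := by
  have h1 := le_abs_self (x - y)
  have h2 := neg_abs_le (x - y)
  rcases le_total a x with hx | hx <;> rcases le_total a y with hy | hy <;>
    rw [abs_le] <;> constructor <;>
    simp [min_eq_left, min_eq_right, hx, hy] <;> linarith

lemma card_line (N : ℕ) (i : Fin 2) (c : ℤ) :
    ((Qc2 (2 * N)).filter (fun k => k i = c)).card ≤ 2 * N := by
  have hmaps : ∀ k ∈ (Qc2 (2 * N)).filter (fun k => k i = c),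
      k (if i = 0 then 1 else 0) ∈ Finset.Ico (-(N : ℤ)) (N : ℤ) := by
    intro k hk
    have hQ := mem_Qc2.mp (Finset.mem_filter.mp hk).1
    rw [Finset.mem_Ico]
    exact ⟨(hQ _).1, (hQ _).2⟩
  have hinj : Set.InjOn (fun k : Z2 => k (if i = 0 then 1 else 0))
      ((Qc2 (2 * N)).filter (fun k => k i = c)) := by
    intro k hk k' hk' h
    have h1 : k i = c := (Finset.mem_filter.mp hk).2
    have h2 : k' i = c := (Finset.mem_filter.mp hk').2
    funext j
    fin_cases i <;> fin_cases j <;> simp_all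
  calc ((Qc2 (2 * N)).filter (fun k => k i = c)).card
      ≤ (Finset.Ico (-(N : ℤ)) (N : ℤ)).card := Finset.card_le_card_of_injOn _ hmaps hinj
    _ = 2 * N := by rw [Int.card_Ico]; omega

def Bdy (N : ℕ) : Finset Z2 :=
  ((Qc2 (2 * N)).filter IsWeak).filter (fun k => deg (2 * N) k ≠ 4)

lemma card_Bdy (N : ℕ) : (Bdy N).card ≤ 8 * N := by
  have hsub : Bdy N ⊆
      (((Qc2 (2 * N)).filter (fun k => k 0 = -(N : ℤ))) ∪
       ((Qc2 (2 * N)).filter (fun k => k 0 = (N : ℤ) - 1))) ∪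
      (((Qc2 (2 * N)).filter (fun k => k 1 = -(N : ℤ))) ∪
       ((Qc2 (2 * N)).filter (fun k => k 1 = (N : ℤ) - 1))) := by
    intro k hk
    obtain ⟨hkW, hdeg⟩ := Finset.mem_filter.mp hk
    obtain ⟨hkQ, hw⟩ := Finset.mem_filter.mp hkW
    by_contra hmem
    simp only [Finset.mem_union, Finset.mem_filter, not_or, not_and] at hmem
    obtain ⟨⟨hm1, hm2⟩, hm3, hm4⟩ := hmem
    have hb := mem_Qc2.mp hkQ
    have hco : ∀ i : Fin 2, k i ≠ -(N : ℤ) ∧ k i ≠ (N : ℤ) - 1 := by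
      intro i
      fin_cases i
      · exact ⟨hm1 hkQ, hm2 hkQ⟩
      · exact ⟨hm3 hkQ, hm4 hkQ⟩
    apply hdeg
    apply deg_interior (2 * N) k hw hkQ
    · intro i
      rw [mem_Qc2]
      intro j
      have hbj := hb j
      have hcj := hco j
      by_cases hji : j = i
      · subst hji
        simp only [Pi.add_apply, e, if_pos rfl]
        omega
      · simp only [Pi.add_apply, e, if_neg hji]
        omega
    · intro i
      rw [mem_Qc2]
      intro j
      have hbj := hb j
      have hcj := hco j
      by_cases hji : j = i
      · subst hji
        simp only [Pi.sub_apply, e, if_pos rfl]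
        omega
      · simp only [Pi.sub_apply, e, if_neg hji]
        omega
  refine (Finset.card_le_card hsub).trans ?_
  refine (Finset.card_union_le _ _).trans ?_
  have h1 := Finset.card_union_le ((Qc2 (2 * N)).filter (fun k => k 0 = -(N : ℤ)))
    ((Qc2 (2 * N)).filter (fun k => k 0 = (N : ℤ) - 1))
  have h2 := Finset.card_union_le ((Qc2 (2 * N)).filter (fun k => k 1 = -(N : ℤ)))
    ((Qc2 (2 * N)).filter (fun k => k 1 = (N : ℤ) - 1))
  have l1 := card_line N 0 (-(N : ℤ))
  have l2 := card_line N 0 ((N : ℤ) - 1)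
  have l3 := card_line N 1 (-(N : ℤ))
  have l4 := card_line N 1 ((N : ℤ) - 1)
  refine le_trans (add_le_add (h1.trans (add_le_add l1 l2)) (h2.trans (add_le_add l3 l4))) ?_
  clear hsub h1 h2 l1 l2 l3 l4
  omega

lemma S_est (g : ℝ → ℝ) (β z : ℝ) (N : ℕ) :
    |S g β z (2 * N) - ((3 * (N : ℝ) ^ 2) * g z + (N : ℝ) ^ 2 * m4 g β z)|
      ≤ 32 * N * |β| := by
  set W := (Qc2 (2 * N)).filter IsWeak with hW
  have hsplit : S g β z (2 * N) =
      (∑ k ∈ W, min (g z) (g (-z) + (deg (2 * N) k : ℝ) * β))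
        + (3 * (N : ℝ) ^ 2) * g z := by
    rw [S, ← Finset.sum_filter_add_sum_filter_not (Qc2 (2 * N)) IsWeak]
    congr 1
    · apply Finset.sum_congr rfl
      intro k hk
      rw [if_pos (Finset.mem_filter.mp hk).2]
    · rw [Finset.sum_congr rfl (fun k hk => if_neg (Finset.mem_filter.mp hk).2),
        Finset.sum_const, nsmul_eq_mul]
      have hcard : ((Qc2 (2 * N)).filter (fun k => ¬ IsWeak k)).card = 3 * N ^ 2 := by
        have := Finset.card_filter_add_card_filter_not
          (s := Qc2 (2 * N)) (p := IsWeak)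
        rw [card_weak, card_Qc2] at this
        omega
      rw [hcard]
      push_cast
      ring
  have hsum : ∑ k ∈ W, min (g z) (g (-z) + (deg (2 * N) k : ℝ) * β)
      = (N : ℝ) ^ 2 * m4 g β z
        + ∑ k ∈ W, (min (g z) (g (-z) + (deg (2 * N) k : ℝ) * β) - m4 g β z) := by
    rw [Finset.sum_sub_distrib, Finset.sum_const, card_weak, nsmul_eq_mul]
    push_cast
    ring
  rw [hsplit, hsum]
  have heq : (N : ℝ) ^ 2 * m4 g β z
        + (∑ k ∈ W, (min (g z) (g (-z) + (deg (2 * N) k : ℝ) * β) - m4 g β z))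
        + (3 * (N : ℝ) ^ 2) * g z
      - ((3 * (N : ℝ) ^ 2) * g z + (N : ℝ) ^ 2 * m4 g β z)
      = ∑ k ∈ W, (min (g z) (g (-z) + (deg (2 * N) k : ℝ) * β) - m4 g β z) := by
    ring
  rw [heq]
  have habs : ∀ k ∈ W, |min (g z) (g (-z) + (deg (2 * N) k : ℝ) * β) - m4 g β z|
      ≤ 4 * |β| := by
    intro k _
    simp only [m4]
    refine (abs_min_sub_min (g z) _ _).trans ?_
    rw [show g (-z) + (deg (2 * N) k : ℝ) * β - (g (-z) + 4 * β)
        = ((deg (2 * N) k : ℝ) - 4) * β from by ring, abs_mul]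
    have hdle : ((deg (2 * N) k : ℝ)) ≤ 4 := by
      exact_mod_cast deg_le_four (2 * N) k
    have hdge : (0 : ℝ) ≤ (deg (2 * N) k : ℝ) := Nat.cast_nonneg _
    have hd : |(deg (2 * N) k : ℝ) - 4| ≤ 4 := by
      rw [abs_le]; constructor <;> linarith
    exact mul_le_mul_of_nonneg_right hd (abs_nonneg β)
  have hzero : ∀ k ∈ W, deg (2 * N) k = 4 →
      min (g z) (g (-z) + (deg (2 * N) k : ℝ) * β) - m4 g β z = 0 := by
    intro k _ hd
    rw [hd]
    simp [m4]
  calc |∑ k ∈ W, (min (g z) (g (-z) + (deg (2 * N) k : ℝ) * β) - m4 g β z)|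
      ≤ ∑ k ∈ W, |min (g z) (g (-z) + (deg (2 * N) k : ℝ) * β) - m4 g β z| :=
        Finset.abs_sum_le_sum_abs _ _
    _ = ∑ k ∈ Bdy N, |min (g z) (g (-z) + (deg (2 * N) k : ℝ) * β) - m4 g β z| := by
        unfold Bdy
        refine (Finset.sum_filter_of_ne ?_).symm
        intro k hk hne hd4
        exact hne (by rw [hzero k hk hd4, abs_zero])
    _ ≤ ∑ k ∈ Bdy N, 4 * |β| := by
        apply Finset.sum_le_sum
        intro k hk
        exact habs k (Finset.mem_filter.mp hk).1
    _ = (Bdy N).card * (4 * |β|) := by rw [Finset.sum_const, nsmul_eq_mul]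
    _ ≤ (8 * N : ℕ) * (4 * |β|) := by
        apply mul_le_mul_of_nonneg_right _ (by positivity)
        exact_mod_cast card_Bdy N
    _ = 32 * N * |β| := by push_cast; ring

lemma main_est (g : ℝ → ℝ) (β z : ℝ) (hz : z = 1 ∨ z = -1) (N : ℕ) (hN : 1 ≤ N) :
    |phi4 g β z (2 * N) - min (g z) ((3 * g z + g (-z)) / 4 + β)| ≤ 8 * |β| / N := by
  have hNpos : (0 : ℝ) < (N : ℝ) := by exact_mod_cast hN
  rw [phi4_eq g β z hz (2 * N), ← limit_identity g β z]
  have hM : ((2 * N : ℕ) : ℝ) ^ 2 = 4 * (N : ℝ) ^ 2 := by push_cast; ring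
  rw [hM]
  have key := S_est g β z N
  have hrw : S g β z (2 * N) / (4 * (N : ℝ) ^ 2) - (3 * g z + m4 g β z) / 4
      = (S g β z (2 * N) - ((3 * (N : ℝ) ^ 2) * g z + (N : ℝ) ^ 2 * m4 g β z))
        / (4 * (N : ℝ) ^ 2) := by
    field_simp
  rw [hrw, abs_div, abs_of_pos (show (0:ℝ) < 4 * (N : ℝ) ^ 2 by positivity)]
  rw [div_le_div_iff₀ (by positivity) hNpos]
  calc |S g β z (2 * N) - ((3 * (N : ℝ) ^ 2) * g z + (N : ℝ) ^ 2 * m4 g β z)| * (N : ℝ)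
      ≤ (32 * (N : ℝ) * |β|) * (N : ℝ) := mul_le_mul_of_nonneg_right key hNpos.le
    _ = 8 * |β| * (4 * (N : ℝ) ^ 2) := by ring

end DP4Aux

open DP4 in
/-- the limit `φ(z) = lim_{M→∞, M even} φ_M(z)` exists and equals
`min{g(z), (3g(z)+g(-z))/4 + β}`. -/
theorem phi4_limit (g : ℝ → ℝ) (β z : ℝ) (hz : z = 1 ∨ z = -1) :
    Filter.Tendsto (fun M : ℕ => phi4 g β z M)
      (Filter.atTop ⊓ Filter.principal {M | Even M})
      (nhds (min (g z) ((3 * g z + g (-z)) / 4 + β))) := by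
  rw [Metric.tendsto_nhds]
  intro ε hε
  rw [Filter.eventually_inf_principal]
  obtain ⟨n₀, hn₀⟩ := exists_nat_gt (8 * |β| / ε)
  have hn₀pos : 0 < n₀ := by
    by_contra h
    have : n₀ = 0 := by omega
    rw [this] at hn₀
    simp only [Nat.cast_zero] at hn₀
    have : (0 : ℝ) ≤ 8 * |β| / ε := by positivity
    linarith
  filter_upwards [Filter.eventually_ge_atTop (2 * n₀)] with M hMge hMeven
  obtain ⟨N, hN2⟩ := hMeven
  have hMN : M = 2 * N := by omega
  subst hMN
  have hNn₀ : n₀ ≤ N := by omega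
  have hN1 : 1 ≤ N := by omega
  rw [Real.dist_eq]
  have hest := DP4Aux.main_est g β z hz N hN1
  have hNpos : (0 : ℝ) < (N : ℝ) := by exact_mod_cast hN1
  have hn₀pos' : (0 : ℝ) < (n₀ : ℝ) := by exact_mod_cast hn₀pos
  have h1 : 8 * |β| / (N : ℝ) ≤ 8 * |β| / (n₀ : ℝ) := by
    apply div_le_div_of_nonneg_left (by positivity) hn₀pos'
    exact_mod_cast hNn₀
  have h2 : 8 * |β| / (n₀ : ℝ) < ε := by
    rw [div_lt_iff₀ hn₀pos']
    have := (div_lt_iff₀ hε).mp hn₀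
    linarith
  calc |phi4 g β z (2 * N) - min (g z) ((3 * g z + g (-z)) / 4 + β)|
      ≤ 8 * |β| / (N : ℝ) := hest
    _ < ε := lt_of_le_of_lt h1 h2
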